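/- Let s₁, …, s_k be distinct nonzero real numbers. Then there exists a constant C > 0 (depending only on s₁, …, s_k) such that: for all pairwise disjoint finite symmetric sets A^{(1)}, …, A^{(k)} ⊂ ℤ\{0} and every K ≥ 1 with Σ_{j=1}^k s_j 1̂_{A^{(j)}}(x) + K ≥ 0 for all x ∈ 𝕋, one has ‖1̂_{A^{(1)}}‖₁ ≤ C·K^k. -/

import Mathlib

/-- `e(x) = e^{2πix}`. -/
noncomputable def eC (x : ℝ) : ℂ := Complex.exp (2 * Real.pi * Complex.I * x)

/-- `1̂_A(x) = ∑_{a ∈ A} e(ax)`. -/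
noncomputable def fhat (A : Finset ℤ) (x : ℝ) : ℂ := ∑ a ∈ A, eC ((a : ℝ) * x)

/-!
Put `F_m = ∑ⱼ s_j^m 1̂_{A^{(j)}}`. Disjointness of the `A^{(j)}` and `1̂_B ∗ 1̂_C = 1̂_{B ∩ C}` give
`F_{m+1} = F_m ∗ F_1` (convolution on `𝕋`), hence `‖F_m‖₁ ≤ ‖F_1‖₁^m`. As the `A^{(j)}` are
symmetric and avoid `0`, `F_1` is real with mean zero, and `F_1 ≥ -K` then forces `‖F_1‖₁ ≤ 2K`.
Since the matrix `(s_j^m)_{j, m ≤ k}` is invertible (`diag(s) · Vandermonde(s)`), `1̂_{A^{(1)}}`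
is a linear combination `∑ α_m F_m` with coefficients depending only on `s`, so
`‖1̂_{A^{(1)}}‖₁ ≤ ∑ |α_m| (2K)^m ≤ C K^k`.
-/

open Finset Function MeasureTheory ComplexConjugate

@[fun_prop]
lemma continuous_eC : Continuous eC := by
  unfold eC; fun_prop

lemma eC_add (x y : ℝ) : eC (x + y) = eC x * eC y := by
  simp only [eC, ← Complex.exp_add]; push_cast; ring_nf

lemma eC_intCast (a : ℤ) : eC a = 1 := by
  rw [eC, ← Complex.exp_int_mul_two_pi_mul_I a]; push_cast; ring_nf

lemma conj_eC (x : ℝ) : conj (eC x) = eC (-x) := by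
  rw [eC, eC, ← Complex.exp_conj]; congr 1; simp [Complex.ext_iff]

lemma integral_eC_intCast_mul (a : ℤ) :
    ∫ x in (0:ℝ)..1, eC (a * x) = if a = 0 then 1 else 0 := by
  split_ifs with ha
  · simp [ha, eC]
  have hc : 2 * (Real.pi : ℂ) * Complex.I * a ≠ 0 := by simp [Real.pi_ne_zero, ha]
  simp only [eC, Complex.ofReal_mul, Complex.ofReal_intCast, ← mul_assoc]
  rw [integral_exp_mul_complex hc, div_eq_zero_iff, sub_eq_zero]
  left
  rw [Complex.ofReal_zero, mul_zero, Complex.exp_zero, ← Complex.exp_int_mul_two_pi_mul_I a]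
  push_cast; ring_nf

lemma continuous_eC_intCast_mul (a : ℤ) : Continuous fun x : ℝ => eC (a * x) :=
  continuous_eC.comp (by fun_prop)

@[fun_prop]
lemma continuous_fhat (A : Finset ℤ) : Continuous (fhat A) :=
  continuous_finsetSum _ fun a _ => continuous_eC_intCast_mul a

lemma fhat_periodic (A : Finset ℤ) : Periodic (fhat A) 1 := fun _ =>
  sum_congr rfl fun a _ => by rw [mul_add, mul_one, eC_add, eC_intCast, mul_one]

@[simp] lemma fhat_empty (x : ℝ) : fhat ∅ x = 0 := sum_empty

lemma integral_fhat (A : Finset ℤ) :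
    ∫ x in (0:ℝ)..1, fhat A x = if (0:ℤ) ∈ A then 1 else 0 := by
  simp only [fhat]
  rw [intervalIntegral.integral_finsetSum fun a _ =>
    (continuous_eC_intCast_mul a).intervalIntegrable 0 1]
  simp_rw [integral_eC_intCast_mul, sum_ite_eq']

lemma conj_fhat {A : Finset ℤ} (hA : ∀ a, a ∈ A ↔ -a ∈ A) (x : ℝ) :
    conj (fhat A x) = fhat A x := by
  simp only [fhat, map_sum]
  exact sum_equiv (Equiv.neg ℤ) hA fun a _ => by
    rw [conj_eC, Equiv.neg_apply, Int.cast_neg, neg_mul]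

noncomputable def circConv (f g : ℝ → ℂ) (x : ℝ) : ℂ := ∫ y in (0:ℝ)..1, f (x - y) * g y

lemma circConv_sum_mul_sum {ι κ : Type*} (s : Finset ι) (t : Finset κ) {f : ι → ℝ → ℂ}
    {g : κ → ℝ → ℂ} (hf : ∀ i, Continuous (f i)) (hg : ∀ j, Continuous (g j)) (x : ℝ) :
    circConv (fun x => ∑ i ∈ s, f i x) (fun y => ∑ j ∈ t, g j y) x =
      ∑ i ∈ s, ∑ j ∈ t, circConv (f i) (g j) x := by
  have hcont : ∀ i j, Continuous fun y => f i (x - y) * g j y := fun i j =>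
    ((hf i).comp (by fun_prop)).mul (hg j)
  simp only [circConv, sum_mul_sum]
  rw [intervalIntegral.integral_finsetSum fun i _ =>
    (continuous_finsetSum t fun j _ => hcont i j).intervalIntegrable 0 1]
  exact sum_congr rfl fun i _ => intervalIntegral.integral_finsetSum fun j _ =>
    (hcont i j).intervalIntegrable 0 1

lemma circConv_const_mul (c d : ℂ) (f g : ℝ → ℂ) (x : ℝ) :
    circConv (fun x => c * f x) (fun y => d * g y) x = c * d * circConv f g x := by
  simp only [circConv, ← intervalIntegral.integral_const_mul]
  exact intervalIntegral.integral_congr fun y _ => by ring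

lemma circConv_eC (a b : ℤ) (x : ℝ) :
    circConv (fun x => eC (a * x)) (fun y => eC (b * y)) x = if a = b then eC (a * x) else 0 := by
  have hsplit : ∀ y, eC (a * (x - y)) * eC (b * y) = eC (a * x) * eC (((b - a : ℤ) : ℝ) * y) :=
    fun y => by rw [← eC_add, ← eC_add]; push_cast; ring_nf
  simp only [circConv, hsplit, intervalIntegral.integral_const_mul, integral_eC_intCast_mul,
    sub_eq_zero, eq_comm (a := b)]
  split_ifs <;> simp

lemma circConv_fhat (B C : Finset ℤ) (x : ℝ) : circConv (fhat B) (fhat C) x = fhat (B ∩ C) x := by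
  rw [show fhat B = fun x => ∑ a ∈ B, eC (a * x) from rfl,
    show fhat C = fun y => ∑ b ∈ C, eC (b * y) from rfl,
    circConv_sum_mul_sum _ _ continuous_eC_intCast_mul continuous_eC_intCast_mul]
  simp only [circConv_eC, sum_ite_eq, fhat, sum_ite_mem]

lemma integral_norm_circConv_le {f g : ℝ → ℂ} (hf : Continuous f) (hg : Continuous g)
    (hfp : Periodic f 1) :
    ∫ x in (0:ℝ)..1, ‖circConv f g x‖ ≤ (∫ x in (0:ℝ)..1, ‖f x‖) * ∫ y in (0:ℝ)..1, ‖g y‖ := by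
  have hshift : ∀ y, ∫ x in (0:ℝ)..1, ‖f (x - y)‖ = ∫ x in (0:ℝ)..1, ‖f x‖ := fun y => by
    have hnp : Periodic (fun x => ‖f x‖) 1 := fun x => by simp only [hfp x]
    rw [intervalIntegral.integral_comp_sub_right (fun x => ‖f x‖)]
    simpa [sub_eq_add_neg, add_comm] using hnp.intervalIntegral_add_eq (-y) 0
  have hcont : Continuous fun p : ℝ × ℝ => ‖f (p.1 - p.2)‖ * ‖g p.2‖ := by fun_prop
  have hint : IntegrableOn (fun p : ℝ × ℝ => ‖f (p.1 - p.2)‖ * ‖g p.2‖)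
      (Set.uIoc 0 1 ×ˢ Set.uIoc 0 1) :=
    (hcont.continuousOn.integrableOn_compact (isCompact_Icc.prod isCompact_Icc)).mono_set
      (Set.prod_mono Set.Ioc_subset_Icc_self Set.Ioc_subset_Icc_self)
  calc ∫ x in (0:ℝ)..1, ‖circConv f g x‖
      ≤ ∫ x in (0:ℝ)..1, ∫ y in (0:ℝ)..1, ‖f (x - y)‖ * ‖g y‖ := by
        refine intervalIntegral.integral_mono_on zero_le_one ?_ ?_ fun x _ => ?_
        · exact (show Continuous fun x => circConv f g x by unfold circConv; fun_prop).norm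
            |>.intervalIntegrable 0 1
        · exact (show Continuous fun x => ∫ y in (0:ℝ)..1, ‖f (x - y)‖ * ‖g y‖ by fun_prop)
            |>.intervalIntegrable 0 1
        simpa only [circConv, norm_mul] using intervalIntegral.norm_integral_le_integral_norm
          (f := fun y => f (x - y) * g y) zero_le_one
    _ = ∫ y in (0:ℝ)..1, ∫ x in (0:ℝ)..1, ‖f (x - y)‖ * ‖g y‖ :=
        intervalIntegral_intervalIntegral_swap hint
    _ = (∫ x in (0:ℝ)..1, ‖f x‖) * ∫ y in (0:ℝ)..1, ‖g y‖ := by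
        simp only [intervalIntegral.integral_mul_const, hshift,
          intervalIntegral.integral_const_mul]

lemma integral_norm_sum_le {κ : Type*} (t : Finset κ) {f : κ → ℝ → ℂ}
    (hf : ∀ m, Continuous (f m)) {a b : ℝ} (hab : a ≤ b) :
    ∫ x in a..b, ‖∑ m ∈ t, f m x‖ ≤ ∑ m ∈ t, ∫ x in a..b, ‖f m x‖ := by
  rw [← intervalIntegral.integral_finsetSum fun m _ => ((hf m).norm).intervalIntegrable a b]
  exact intervalIntegral.integral_mono_on hab
    ((continuous_finsetSum t fun m _ => hf m).norm.intervalIntegrable a b)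
    ((continuous_finsetSum t fun m _ => (hf m).norm).intervalIntegrable a b)
    fun x _ => norm_sum_le t fun m => f m x

lemma integral_abs_le_of_integral_eq_zero {f : ℝ → ℝ} {a b K : ℝ} (hab : a ≤ b)
    (hf : IntervalIntegrable f volume a b) (hmean : ∫ x in a..b, f x = 0) (hK : 0 ≤ K)
    (hfK : ∀ x ∈ Set.Icc a b, 0 ≤ f x + K) :
    ∫ x in a..b, |f x| ≤ 2 * K * (b - a) :=
  calc ∫ x in a..b, |f x|
      ≤ ∫ x in a..b, (f x + 2 * K) :=
        intervalIntegral.integral_mono_on hab hf.abs (hf.add intervalIntegrable_const)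
          fun x hx => abs_le.2 ⟨by linarith [hfK x hx], by linarith⟩
    _ = 2 * K * (b - a) := by
        rw [intervalIntegral.integral_add hf intervalIntegrable_const, hmean,
          intervalIntegral.integral_const, smul_eq_mul]
        ring

lemma exists_sum_smul_pow_succ_eq {R : Type*} [Field R] {k : ℕ} {s : Fin k → R}
    (hinj : Injective s) (hne : ∀ i, s i ≠ 0) (v : Fin k → R) :
    ∃ α : Fin k → R, ∑ m, α m • s ^ ((m : ℕ) + 1) = v := by
  set M : Matrix (Fin k) (Fin k) R := Matrix.diagonal s * Matrix.vandermonde s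
  have hdet : M.det ≠ 0 := by
    rw [Matrix.det_mul, Matrix.det_diagonal, Matrix.det_vandermonde]
    exact mul_ne_zero (prod_ne_zero_iff.2 fun i _ => hne i) <| prod_ne_zero_iff.2 fun i _ =>
      prod_ne_zero_iff.2 fun j hj => sub_ne_zero.2 (hinj.ne (mem_Ioi.1 hj).ne')
  obtain ⟨α, hα⟩ := Matrix.mulVec_surjective_iff_isUnit.2
    (M.isUnit_iff_isUnit_det.2 hdet.isUnit) v
  refine ⟨α, hα ▸ funext fun j => ?_⟩
  simp [M, Matrix.mulVec, dotProduct, Matrix.diagonal_mul, Matrix.vandermonde, pow_succ',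
    Finset.sum_apply, mul_comm]

section Combination

variable {ι : Type*} [Fintype ι]

noncomputable def fhatComb (c : ι → ℝ) (A : ι → Finset ℤ) (x : ℝ) : ℂ :=
  ∑ j, (c j : ℂ) * fhat (A j) x

@[fun_prop]
lemma continuous_fhatComb (c : ι → ℝ) (A : ι → Finset ℤ) : Continuous (fhatComb c A) :=
  continuous_finsetSum _ fun j _ => continuous_const.mul (continuous_fhat (A j))

lemma fhatComb_periodic (c : ι → ℝ) (A : ι → Finset ℤ) : Periodic (fhatComb c A) 1 :=
  fun x => sum_congr rfl fun j _ => by rw [fhat_periodic]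

lemma fhatComb_pi_single [DecidableEq ι] (A : ι → Finset ℤ) (i : ι) :
    fhatComb (Pi.single i 1) A = fhat (A i) := by
  ext x; simp [fhatComb, Pi.single_apply, apply_ite ((↑) : ℝ → ℂ)]

lemma fhatComb_sum_smul {κ : Type*} (t : Finset κ) (α : κ → ℝ) (c : κ → ι → ℝ)
    (A : ι → Finset ℤ) (x : ℝ) :
    fhatComb (∑ m ∈ t, α m • c m) A x = ∑ m ∈ t, (α m : ℂ) * fhatComb (c m) A x := by
  simp only [fhatComb, Finset.sum_apply, Pi.smul_apply, smul_eq_mul, Complex.ofReal_sum,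
    Complex.ofReal_mul, sum_mul, mul_sum, mul_assoc]
  exact sum_comm

lemma circConv_fhatComb {A : ι → Finset ℤ} (hA : Pairwise (Disjoint on A)) (c d : ι → ℝ)
    (x : ℝ) : circConv (fhatComb c A) (fhatComb d A) x = fhatComb (c * d) A x := by
  unfold fhatComb
  rw [circConv_sum_mul_sum _ _ (fun i => by fun_prop) (fun j => by fun_prop)]
  simp only [circConv_const_mul, circConv_fhat]
  refine sum_congr rfl fun i _ => ?_
  rw [sum_eq_single i (fun j _ hji => by
    rw [disjoint_iff_inter_eq_empty.1 (hA hji.symm), fhat_empty, mul_zero])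
    (by simp), inter_self, Pi.mul_apply, Complex.ofReal_mul]

lemma integral_norm_fhatComb_pow_le {A : ι → Finset ℤ} (hA : Pairwise (Disjoint on A))
    (c : ι → ℝ) (n : ℕ) :
    ∫ x in (0:ℝ)..1, ‖fhatComb (c ^ (n + 1)) A x‖ ≤
      (∫ x in (0:ℝ)..1, ‖fhatComb c A x‖) ^ (n + 1) := by
  induction n with
  | zero => simp
  | succ n ih =>
    have hL1 : 0 ≤ ∫ x in (0:ℝ)..1, ‖fhatComb c A x‖ :=
      intervalIntegral.integral_nonneg zero_le_one fun x _ => norm_nonneg _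
    calc ∫ x in (0:ℝ)..1, ‖fhatComb (c ^ (n + 2)) A x‖
        = ∫ x in (0:ℝ)..1, ‖circConv (fhatComb (c ^ (n + 1)) A) (fhatComb c A) x‖ := by
          simp only [circConv_fhatComb hA, pow_succ]
      _ ≤ (∫ x in (0:ℝ)..1, ‖fhatComb (c ^ (n + 1)) A x‖) * ∫ x in (0:ℝ)..1, ‖fhatComb c A x‖ :=
          integral_norm_circConv_le (continuous_fhatComb _ _) (continuous_fhatComb _ _)
            (fhatComb_periodic _ _)
      _ ≤ (∫ x in (0:ℝ)..1, ‖fhatComb c A x‖) ^ (n + 2) := by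
          rw [pow_succ]; exact mul_le_mul_of_nonneg_right ih hL1

lemma fhatComb_eq_ofReal {A : ι → Finset ℤ} (hA : ∀ j a, a ∈ A j ↔ -a ∈ A j) (c : ι → ℝ)
    (x : ℝ) : fhatComb c A x = ((∑ j, c j * (fhat (A j) x).re : ℝ) : ℂ) := by
  simp only [fhatComb, Complex.ofReal_sum, Complex.ofReal_mul,
    Complex.conj_eq_iff_re.1 (conj_fhat (hA _) x)]

lemma integral_fhatComb {A : ι → Finset ℤ} (hA : ∀ j, (0:ℤ) ∉ A j) (c : ι → ℝ) :
    ∫ x in (0:ℝ)..1, fhatComb c A x = 0 := by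
  unfold fhatComb
  rw [intervalIntegral.integral_finsetSum fun j _ =>
    (by fun_prop : Continuous fun x => (c j : ℂ) * fhat (A j) x).intervalIntegrable 0 1]
  simp [integral_fhat, hA]

lemma integral_norm_fhatComb_le {A : ι → Finset ℤ}
    (h0 : ∀ j, (0:ℤ) ∉ A j) (hsym : ∀ j a, a ∈ A j ↔ -a ∈ A j) (c : ι → ℝ) {K : ℝ}
    (hK : 0 ≤ K) (hpos : ∀ x, 0 ≤ (∑ j, c j * (fhat (A j) x).re) + K) :
    ∫ x in (0:ℝ)..1, ‖fhatComb c A x‖ ≤ 2 * K := by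
  set F : ℝ → ℝ := fun x => ∑ j, c j * (fhat (A j) x).re
  have hF : ∀ x, fhatComb c A x = F x := fhatComb_eq_ofReal hsym c
  have hmean : ∫ x in (0:ℝ)..1, F x = 0 := by
    have := integral_fhatComb h0 c
    simp_rw [hF, intervalIntegral.integral_ofReal] at this
    exact_mod_cast this
  calc ∫ x in (0:ℝ)..1, ‖fhatComb c A x‖ = ∫ x in (0:ℝ)..1, |F x| := by
        simp_rw [hF, Complex.norm_real, Real.norm_eq_abs]
    _ ≤ 2 * K * (1 - 0) := integral_abs_le_of_integral_eq_zero zero_le_one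
        ((by fun_prop : Continuous F).intervalIntegrable 0 1) hmean hK fun x _ => hpos x
    _ = 2 * K := by ring

end Combination

/-- If `∑ s_j 1̂_{A^{(j)}} + K ≥ 0` for distinct nonzero reals `s₁, …, s_k`,
then `‖1̂_{A^{(1)}}‖₁ ≤ C·K^k`. -/
theorem l1_bound_A1 (k : ℕ) (hk : 0 < k) (s : Fin k → ℝ)
    (hinj : Function.Injective s) (hne : ∀ i, s i ≠ 0) :
    ∃ C : ℝ, 0 < C ∧
      ∀ A : Fin k → Finset ℤ,
        (∀ i, (0 : ℤ) ∉ A i) → (∀ i, ∀ a : ℤ, a ∈ A i ↔ -a ∈ A i) →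
        (∀ i j, i ≠ j → Disjoint (A i) (A j)) →
        ∀ K : ℝ, 1 ≤ K →
          (∀ x : ℝ, 0 ≤ (∑ j, s j * (fhat (A j) x).re) + K) →
          (∫ x in (0:ℝ)..1, ‖fhat (A ⟨0, hk⟩) x‖) ≤ C * K ^ k := by
  obtain ⟨α, hα⟩ := exists_sum_smul_pow_succ_eq hinj hne (Pi.single ⟨0, hk⟩ 1)
  refine ⟨∑ m, |α m| * 2 ^ ((m : ℕ) + 1) + 1, by positivity, ?_⟩
  intro A h0 hsym hdisj K hK hpos
  have hpow (m : Fin k) :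
      ∫ x in (0:ℝ)..1, ‖fhatComb (s ^ ((m : ℕ) + 1)) A x‖ ≤ 2 ^ ((m : ℕ) + 1) * K ^ k :=
    calc _ ≤ (2 * K) ^ ((m : ℕ) + 1) :=
          (integral_norm_fhatComb_pow_le (fun i j => hdisj i j) s m).trans <| pow_le_pow_left₀
            (intervalIntegral.integral_nonneg zero_le_one fun x _ => norm_nonneg _)
            (integral_norm_fhatComb_le h0 hsym s (by linarith) hpos) _
      _ ≤ 2 ^ ((m : ℕ) + 1) * K ^ k := by
          rw [mul_pow]; gcongr; exact m.isLt
  have hdecomp : fhat (A ⟨0, hk⟩) = fun x => ∑ m, (α m : ℂ) * fhatComb (s ^ ((m : ℕ) + 1)) A x := by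
    ext x; rw [← fhatComb_pi_single, ← hα, fhatComb_sum_smul]
  calc ∫ x in (0:ℝ)..1, ‖fhat (A ⟨0, hk⟩) x‖
      ≤ ∑ m, ∫ x in (0:ℝ)..1, ‖(α m : ℂ) * fhatComb (s ^ ((m : ℕ) + 1)) A x‖ :=
        hdecomp ▸ integral_norm_sum_le _ (fun m => by fun_prop) zero_le_one
    _ = ∑ m, |α m| * ∫ x in (0:ℝ)..1, ‖fhatComb (s ^ ((m : ℕ) + 1)) A x‖ := by
        simp only [norm_mul, Complex.norm_real, Real.norm_eq_abs,
          intervalIntegral.integral_const_mul]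
    _ ≤ ∑ m, |α m| * (2 ^ ((m : ℕ) + 1) * K ^ k) :=
        sum_le_sum fun m _ => mul_le_mul_of_nonneg_left (hpow m) (abs_nonneg _)
    _ ≤ (∑ m, |α m| * 2 ^ ((m : ℕ) + 1) + 1) * K ^ k := by
        rw [add_mul, sum_mul]
        simp only [mul_assoc, le_add_iff_nonneg_right, one_mul]
        positivity
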